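/- With X_1,...,X_M i.i.d. with mean m and variance σ², partition {1,...,M} into cells with n nonempty cells, Y = ∑ over nonempty cells of the cell-average, S = ∑ X_u: the minimizer over β ∈ ℝ of the mean square error E[(Y − βS)²] among estimators of the form βS is β* = E[YS]/E[S²] = n/M, provided M m² + σ² > 0. -/

import Mathlib

/-!
By independence `E[X_u X_v] = m² + σ² δ_uv`, so every `X_u` has the same correlation
`K = M m² + σ²` with `S`. A cell average therefore also has correlation `K` with `S`, giving
`E[Y S] = n K`, while `E[S²] = M K`. With `β* = E[Y S] / E[S²]` one has
`E[(Y - β S)²] = E[(Y - β* S)²] + (β - β*)² E[S²]`.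
-/

open MeasureTheory ProbabilityTheory Finset

lemma integral_sq_sub_mul {Ω : Type*} [MeasurableSpace Ω] {μ : Measure Ω} {Y S : Ω → ℝ}
    (hY : MemLp Y 2 μ) (hS : MemLp S 2 μ) (β : ℝ) :
    ∫ ω, (Y ω - β * S ω) ^ 2 ∂μ
      = ∫ ω, Y ω ^ 2 ∂μ - 2 * β * ∫ ω, Y ω * S ω ∂μ + β ^ 2 * ∫ ω, S ω ^ 2 ∂μ := by
  have hYS : Integrable (fun ω => 2 * β * (Y ω * S ω)) μ := (hY.integrable_mul hS).const_mul _
  have hS2 : Integrable (fun ω => β ^ 2 * S ω ^ 2) μ := hS.integrable_sq.const_mul _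
  have hexpand : (fun ω => (Y ω - β * S ω) ^ 2)
      = fun ω => (Y ω ^ 2 - 2 * β * (Y ω * S ω)) + β ^ 2 * S ω ^ 2 := by
    funext ω; ring
  have hY2 : Integrable (fun ω => Y ω ^ 2) μ := hY.integrable_sq
  have hdiff : Integrable (fun ω => Y ω ^ 2 - 2 * β * (Y ω * S ω)) μ := hY2.sub hYS
  rw [hexpand, integral_add hdiff hS2, integral_sub hY2 hYS,
    integral_const_mul, integral_const_mul]

lemma integral_sq_sub_mul_le_of_integral_mul_eq {Ω : Type*} [MeasurableSpace Ω] {μ : Measure Ω}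
    {Y S : Ω → ℝ} (hY : MemLp Y 2 μ) (hS : MemLp S 2 μ) {t : ℝ}
    (ht : ∫ ω, Y ω * S ω ∂μ = t * ∫ ω, S ω ^ 2 ∂μ) (β : ℝ) :
    ∫ ω, (Y ω - t * S ω) ^ 2 ∂μ ≤ ∫ ω, (Y ω - β * S ω) ^ 2 ∂μ := by
  have hS2 : 0 ≤ ∫ ω, S ω ^ 2 ∂μ := integral_nonneg fun ω => sq_nonneg (S ω)
  rw [integral_sq_sub_mul hY hS, integral_sq_sub_mul hY hS, ht]
  nlinarith [mul_nonneg (sq_nonneg (β - t)) hS2]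

section SecondMoments

variable {Ω ι : Type*} [MeasurableSpace Ω] {μ : Measure Ω} [IsProbabilityMeasure μ]
  {X : ι → Ω → ℝ} {m σ : ℝ}

lemma integral_mul_eq_of_pairwise_indepFun [DecidableEq ι]
    (hindep : Pairwise fun u v => X u ⟂ᵢ[μ] X v) (hL2 : ∀ u, MemLp (X u) 2 μ)
    (hmean : ∀ u, μ[X u] = m) (hvar : ∀ u, Var[X u; μ] = σ ^ 2) (u v : ι) :
    ∫ ω, X u ω * X v ω ∂μ = (if u = v then σ ^ 2 else 0) + m ^ 2 := by
  have hcov := covariance_eq_sub (hL2 u) (hL2 v)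
  rw [hmean, hmean] at hcov
  split_ifs with huv
  · subst huv
    rw [covariance_self (hL2 u).aemeasurable, hvar] at hcov
    simp only [Pi.mul_apply] at hcov
    linarith
  · rw [(hindep huv).covariance_eq_zero (hL2 u) (hL2 v)] at hcov
    simp only [Pi.mul_apply] at hcov
    linarith

variable [Fintype ι]

lemma integral_mul_sum_of_pairwise_indepFun
    (hindep : Pairwise fun u v => X u ⟂ᵢ[μ] X v) (hL2 : ∀ u, MemLp (X u) 2 μ)
    (hmean : ∀ u, μ[X u] = m) (hvar : ∀ u, Var[X u; μ] = σ ^ 2) (u : ι) :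
    ∫ ω, X u ω * ∑ v, X v ω ∂μ = Fintype.card ι * m ^ 2 + σ ^ 2 := by
  classical
  simp_rw [mul_sum]
  have hint : ∀ v, Integrable (fun ω => X u ω * X v ω) μ :=
    fun v => (hL2 u).integrable_mul (hL2 v)
  rw [integral_finsetSum _ fun v _ => hint v]
  simp_rw [integral_mul_eq_of_pairwise_indepFun hindep hL2 hmean hvar u]
  simp [sum_add_distrib, add_comm]

lemma integral_sum_mul_sum_of_pairwise_indepFun
    (hindep : Pairwise fun u v => X u ⟂ᵢ[μ] X v) (hL2 : ∀ u, MemLp (X u) 2 μ)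
    (hmean : ∀ u, μ[X u] = m) (hvar : ∀ u, Var[X u; μ] = σ ^ 2) (s : Finset ι) :
    ∫ ω, (∑ u ∈ s, X u ω) * ∑ v, X v ω ∂μ = #s * (Fintype.card ι * m ^ 2 + σ ^ 2) := by
  have hS : MemLp (fun ω => ∑ v, X v ω) 2 μ := memLp_finsetSum _ fun v _ => hL2 v
  simp_rw [sum_mul]
  have hint : ∀ u, Integrable (fun ω => X u ω * ∑ v, X v ω) μ :=
    fun u => (hL2 u).integrable_mul hS
  rw [integral_finsetSum _ fun u _ => hint u]
  simp_rw [integral_mul_sum_of_pairwise_indepFun hindep hL2 hmean hvar]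
  rw [sum_const, nsmul_eq_mul]

lemma integral_sum_average_mul_sum_of_pairwise_indepFun
    (hindep : Pairwise fun u v => X u ⟂ᵢ[μ] X v) (hL2 : ∀ u, MemLp (X u) 2 μ)
    (hmean : ∀ u, μ[X u] = m) (hvar : ∀ u, Var[X u; μ] = σ ^ 2)
    {L : Type*} (U : L → Finset ι) (T : Finset L) (hT : ∀ i ∈ T, (U i).Nonempty) :
    ∫ ω, (∑ i ∈ T, (1 / (#(U i) : ℝ)) * ∑ u ∈ U i, X u ω) * ∑ v, X v ω ∂μ
      = #T * (Fintype.card ι * m ^ 2 + σ ^ 2) := by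
  have hS : MemLp (fun ω => ∑ v, X v ω) 2 μ := memLp_finsetSum _ fun v _ => hL2 v
  have hcell : ∀ i, MemLp (fun ω => ∑ u ∈ U i, X u ω) 2 μ :=
    fun i => memLp_finsetSum _ fun u _ => hL2 u
  simp_rw [sum_mul, mul_assoc]
  have hint : ∀ i, Integrable (fun ω => (∑ u ∈ U i, X u ω) * ∑ v, X v ω) μ :=
    fun i => (hcell i).integrable_mul hS
  rw [integral_finsetSum _ fun i _ => (hint i).const_mul _]
  simp_rw [integral_const_mul, integral_sum_mul_sum_of_pairwise_indepFun hindep hL2 hmean hvar]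
  have hcancel : ∀ i ∈ T, 1 / (#(U i) : ℝ) * (#(U i) * (Fintype.card ι * m ^ 2 + σ ^ 2))
      = Fintype.card ι * m ^ 2 + σ ^ 2 := fun i hi => by
    rw [one_div, inv_mul_cancel_left₀ (by exact_mod_cast (hT i hi).card_pos.ne')]
  rw [sum_congr rfl hcancel, sum_const, nsmul_eq_mul]

end SecondMoments

theorem mmse_optimal_estimator_general
    {Ω : Type*} [MeasurableSpace Ω] (μ : Measure Ω) [IsProbabilityMeasure μ]
    (M : ℕ) (hM : 0 < M) (X : Fin M → Ω → ℝ)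
    (hindep : ProbabilityTheory.iIndepFun X μ)
    (hL2 : ∀ u, MemLp (X u) 2 μ)
    (m σ : ℝ)
    (hmean : ∀ u, ∫ ω, X u ω ∂μ = m)
    (hvar : ∀ u, ProbabilityTheory.variance (X u) μ = σ ^ 2)
    (hpos : (M : ℝ) * m ^ 2 + σ ^ 2 > 0)
    {L : Type*} [Fintype L]
    (U : L → Finset (Fin M))
    (n : ℕ) (hn : n = (Finset.univ.filter (fun i => (U i).Nonempty)).card)
    (Y S : Ω → ℝ)
    (hY : Y = fun ω => ∑ i ∈ Finset.univ.filter (fun i => (U i).Nonempty),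
            (1 / ((U i).card : ℝ)) * ∑ u ∈ U i, X u ω)
    (hS : S = fun ω => ∑ u, X u ω) :
    (∀ β : ℝ, ∫ ω, (Y ω - ((n : ℝ) / (M : ℝ)) * S ω) ^ 2 ∂μ
        ≤ ∫ ω, (Y ω - β * S ω) ^ 2 ∂μ) ∧
    (∫ ω, Y ω * S ω ∂μ) / (∫ ω, (S ω) ^ 2 ∂μ) = (n : ℝ) / (M : ℝ) := by
  have hpair : Pairwise fun u v => X u ⟂ᵢ[μ] X v := fun u v huv => hindep.indepFun huv
  have hSS : ∫ ω, S ω ^ 2 ∂μ = M * (M * m ^ 2 + σ ^ 2) := by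
    simpa [hS, pow_two] using
      integral_sum_mul_sum_of_pairwise_indepFun hpair hL2 hmean hvar univ
  have hYS : ∫ ω, Y ω * S ω ∂μ = n * (M * m ^ 2 + σ ^ 2) := by
    simpa [hY, hS, hn] using integral_sum_average_mul_sum_of_pairwise_indepFun hpair hL2 hmean
      hvar U _ fun i hi => (mem_filter.1 hi).2
  have hSL2 : MemLp S 2 μ := hS ▸ memLp_finsetSum _ fun u _ => hL2 u
  have hYL2 : MemLp Y 2 μ :=
    hY ▸ memLp_finsetSum _ fun i _ => (memLp_finsetSum _ fun u _ => hL2 u).const_mul _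
  have hM' : (M : ℝ) ≠ 0 := by exact_mod_cast hM.ne'
  refine ⟨integral_sq_sub_mul_le_of_integral_mul_eq hYL2 hSL2 ?_, ?_⟩
  · rw [hYS, hSS]; field_simp
  · rw [hYS, hSS, mul_div_mul_right _ _ hpos.ne']

/-- MMSE estimator: with `X₁,…,X_M` i.i.d. (mean `m`, variance `σ²`), a
partition of `{1,…,M}` with `n` nonempty cells, `Y` the sum of cell averages
and `S` the total sum, the minimizer over `β ∈ ℝ` of `E[(Y − β S)²]` is
`β* = E[Y S]/E[S²] = n/M`, provided `M m² + σ² > 0`. -/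
theorem mmse_optimal_estimator
    {Ω : Type*} [MeasurableSpace Ω] (μ : Measure Ω) [IsProbabilityMeasure μ]
    (M : ℕ) (hM : 0 < M) (X : Fin M → Ω → ℝ)
    (hmeas : ∀ u, Measurable (X u))
    (hindep : ProbabilityTheory.iIndepFun X μ)
    (hident : ∀ u v, ProbabilityTheory.IdentDistrib (X u) (X v) μ μ)
    (hL2 : ∀ u, MemLp (X u) 2 μ)
    (m σ : ℝ)
    (hmean : ∀ u, ∫ ω, X u ω ∂μ = m)
    (hvar : ∀ u, ProbabilityTheory.variance (X u) μ = σ ^ 2)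
    (hpos : (M : ℝ) * m ^ 2 + σ ^ 2 > 0)
    {L : Type*} [Fintype L] [DecidableEq L]
    (U : L → Finset (Fin M))
    (hdisj : ∀ i j, i ≠ j → Disjoint (U i) (U j))
    (hcover : Finset.univ.biUnion U = Finset.univ)
    (n : ℕ) (hn : n = (Finset.univ.filter (fun i => (U i).Nonempty)).card)
    (Y S : Ω → ℝ)
    (hY : Y = fun ω => ∑ i ∈ Finset.univ.filter (fun i => (U i).Nonempty),
            (1 / ((U i).card : ℝ)) * ∑ u ∈ U i, X u ω)
    (hS : S = fun ω => ∑ u, X u ω) :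
    (∀ β : ℝ, ∫ ω, (Y ω - ((n : ℝ) / (M : ℝ)) * S ω) ^ 2 ∂μ
        ≤ ∫ ω, (Y ω - β * S ω) ^ 2 ∂μ) ∧
    (∫ ω, Y ω * S ω ∂μ) / (∫ ω, (S ω) ^ 2 ∂μ) = (n : ℝ) / (M : ℝ) :=
  mmse_optimal_estimator_general μ M hM X hindep hL2 m σ hmean hvar hpos U n hn Y S hY hS
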